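/- arXiv:1701.07348 — 3 statements merged into one kernel-verified Lean document; each statement's English description precedes it below -/
import Mathlib

section
/- Define f₁(m₁,m₂) = 33m₁ + 49m₂ and f_t(m₁,m₂) = f_{t−1}(f_{t−1}(32m₁+49m₂, m₁+m₂−1), 32m₁+49m₂) for t ≥ 2. Write f_t(m₁,m₂) = a_t m₁ + b_t m₂ + c_t. Then for all t ≥ 2: a_t ≤ 32·35^{2^t−2}, b_t ≤ 49·35^{2^t−2}, and c_t ≤ 0; consequently f_t(m₁,m₂) ≤ 35^{2^t−2}(32m₁ + 49m₂) for all positive integers m₁, m₂. -/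
/-- `ramseyF t` is the function `f_{t+1}` of the paper. -/
def ramseyF : ℕ → ℤ → ℤ → ℤ
  | 0, m₁, m₂ => 33 * m₁ + 49 * m₂
  | t + 1, m₁, m₂ =>
      ramseyF t (ramseyF t (32 * m₁ + 49 * m₂) (m₁ + m₂ - 1)) (32 * m₁ + 49 * m₂)

/-- `(a_{t+1}, b_{t+1}, c_{t+1})`: the coefficients with `a₁ = 33`, `b₁ = 49`, `c₁ = 0` and
`a_t = 32a_{t-1}² + a_{t-1}b_{t-1} + 32b_{t-1}`, `b_t = 49a_{t-1}² + a_{t-1}b_{t-1} + 49b_{t-1}`,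
`c_t = -a_{t-1}b_{t-1} + a_{t-1}c_{t-1} + c_{t-1}`. -/
def ramseyABC : ℕ → ℤ × ℤ × ℤ
  | 0 => (33, 49, 0)
  | t + 1 =>
      let p := ramseyABC t
      (32 * p.1 ^ 2 + p.1 * p.2.1 + 32 * p.2.1,
       49 * p.1 ^ 2 + p.1 * p.2.1 + 49 * p.2.1,
       -p.1 * p.2.1 + p.1 * p.2.2 + p.2.2)

lemma ramseyF_lin : ∀ (s : ℕ) (m₁ m₂ : ℤ), ramseyF s m₁ m₂ =
    (ramseyABC s).1 * m₁ + (ramseyABC s).2.1 * m₂ + (ramseyABC s).2.2 := by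
  intro s
  induction s with
  | zero => intro m₁ m₂; simp [ramseyF, ramseyABC]
  | succ n ih =>
      intro m₁ m₂
      simp only [ramseyF, ramseyABC]
      rw [ih, ih]
      ring

lemma ramseyABC_pos (s : ℕ) :
    1 ≤ (ramseyABC s).1 ∧ 1 ≤ (ramseyABC s).2.1 ∧ (ramseyABC s).2.2 ≤ 0 := by
  induction s with
  | zero => norm_num [ramseyABC]
  | succ n ih =>
      obtain ⟨ha, hb, hc⟩ := ih
      refine ⟨?_, ?_, ?_⟩ <;> simp only [ramseyABC] <;> nlinarith

lemma ramseyABC_bound : ∀ s : ℕ, 1 ≤ s →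
    (ramseyABC s).1 ≤ 32 * 35 ^ (2 ^ (s + 1) - 2) ∧
    (ramseyABC s).2.1 ≤ 49 * 35 ^ (2 ^ (s + 1) - 2) := by
  intro s hs
  induction s, hs using Nat.le_induction with
  | base => norm_num [ramseyABC]
  | succ n hn ih =>
      obtain ⟨ha, hb⟩ := ih
      obtain ⟨ha1, hb1, _⟩ := ramseyABC_pos n
      have hX : (1 : ℤ) ≤ 35 ^ (2 ^ (n + 1) - 2) := one_le_pow₀ (by norm_num)
      have h2 : 2 ^ (n + 2) = 2 * 2 ^ (n + 1) := by ring
      have h2' : 2 ≤ 2 ^ (n + 1) := Nat.one_lt_two_pow_iff.2 (by omega)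
      have hexp : 2 ^ (n + 1 + 1) - 2 = (2 ^ (n + 1) - 2) * 2 + 2 := by omega
      rw [hexp, pow_add, pow_mul]
      set X : ℤ := 35 ^ (2 ^ (n + 1) - 2) with hXdef
      constructor <;> simp only [ramseyABC] <;>
        nlinarith [mul_le_mul ha ha (by linarith) (by positivity),
          mul_le_mul ha hb (by linarith) (by positivity), sq_nonneg X, mul_pos (lt_of_lt_of_le one_pos ha1) (lt_of_lt_of_le one_pos hb1)]

theorem stmt_9 (t : ℕ) (ht : 2 ≤ t) :
    (∀ m₁ m₂ : ℤ, ramseyF (t - 1) m₁ m₂ =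
        (ramseyABC (t - 1)).1 * m₁ + (ramseyABC (t - 1)).2.1 * m₂ + (ramseyABC (t - 1)).2.2) ∧
    (ramseyABC (t - 1)).1 ≤ 32 * 35 ^ (2 ^ t - 2) ∧
    (ramseyABC (t - 1)).2.1 ≤ 49 * 35 ^ (2 ^ t - 2) ∧
    (ramseyABC (t - 1)).2.2 ≤ 0 ∧
    ∀ m₁ m₂ : ℤ, 1 ≤ m₁ → 1 ≤ m₂ →
      ramseyF (t - 1) m₁ m₂ ≤ 35 ^ (2 ^ t - 2) * (32 * m₁ + 49 * m₂) := by
  obtain ⟨s, rfl⟩ : ∃ s, t = s + 1 := ⟨t - 1, by omega⟩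
  simp only [Nat.add_sub_cancel]
  have hs : 1 ≤ s := by omega
  obtain ⟨ha, hb⟩ := ramseyABC_bound s hs
  obtain ⟨ha1, hb1, hc⟩ := ramseyABC_pos s
  have hX : (1 : ℤ) ≤ 35 ^ (2 ^ (s + 1) - 2) := one_le_pow₀ (by norm_num)
  refine ⟨ramseyF_lin s, ha, hb, hc, fun m₁ m₂ hm₁ hm₂ => ?_⟩
  rw [ramseyF_lin s]
  nlinarith [mul_le_mul ha (le_refl m₁) (by linarith) (by positivity),
    mul_le_mul hb (le_refl m₂) (by linarith) (by positivity)]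
end

section
/- Let c > 0 be a real number with 2c < 1, and let d be a real number satisfying (1−2c)ln(1−2c) + 2c·ln(c) + c²d ≥ 0. Then, in the Erdős–Rényi random graph G(N, d/N), asymptotically almost surely every two disjoint vertex sets S, T with |S| = |T| = cN satisfy e(S,T) ≥ 1 (there is at least one edge between S and T). -/
open MeasureTheory

/-- The Erdős–Rényi random graph `G(N, p)`: each unordered pair of vertices of `Fin N` is an
edge independently with probability `p` (probabilities are truncated at `1`). A sample is the
indicator function of the edge set. -/
noncomputable def erdosRenyi (N : ℕ) (p : ℝ) : Measure (Sym2 (Fin N) → Bool) :=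
  Measure.pi fun _ =>
    (PMF.bernoulli (min (Real.toNNReal p) 1) (min_le_right _ _)).toMeasure

/-- In a sampled graph `f`, `S` and `T` are joined by at least one edge. -/
def hasEdgeBetween {N : ℕ} (f : Sym2 (Fin N) → Bool) (S T : Finset (Fin N)) : Prop :=
  ∃ s ∈ S, ∃ t ∈ T, f s(s, t) = true

/-! The first moment method. With `k = ⌊cN⌋`, the probability that some pair of disjoint `k`-sets
spans no edge is at most the expected number of such ordered pairs,
`C(N, k) C(N - k, k) (1 - d/N)^(k²)`. Stirling's formula, kept with its `√n` factors, and Gibbs'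
inequality bound the logarithm of this expectation by
`-N ((1 - 2c) log (1 - 2c) + 2c log c + c²d) - log N + O(1)`. The hypothesis makes the first term
nonpositive, so the expectation is `O(1/N)`; the `√n` factors are what settle the boundary case. -/

open Filter Topology Real
open scoped Nat

theorem Stirling.log_factorial_le_stirling {n : ℕ} (hn : n ≠ 0) :
    log n ! ≤ n * log n - n + log n / 2 + 1 := by
  obtain ⟨m, rfl⟩ := Nat.exists_eq_succ_of_ne_zero hn
  have h := Stirling.log_stirlingSeq'_antitone (Nat.zero_le m)
  simp only [Function.comp_apply, Nat.succ_eq_add_one, zero_add, Stirling.stirlingSeq_one] at h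
  rw [Stirling.log_stirlingSeq_formula, log_div (exp_pos 1).ne' (by positivity), log_exp,
    log_sqrt zero_le_two, log_mul two_ne_zero (by positivity),
    log_div (by positivity) (exp_pos 1).ne', log_exp] at h
  linarith

theorem Real.mul_log_le_mul_log_add_sub {a b : ℝ} (ha : 0 < a) (hb : 0 < b) :
    a * log b ≤ a * log a + (b - a) := by
  have h := mul_le_mul_of_nonneg_left (log_le_sub_one_of_pos (div_pos hb ha)) ha.le
  rw [log_div hb.ne' ha.ne', mul_sub_one, mul_div_cancel₀ _ ha.ne'] at h
  linarith

lemma log_choose_mul_choose_le {N k m : ℕ} (hN : N = 2 * k + m) (hk : k ≠ 0) (hm : m ≠ 0) :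
    log ((N.choose k * (N - k).choose k : ℕ) : ℝ) ≤
      N * log N - 2 * (k * log k) - m * log m + (log N - 2 * log k - log m) / 2 + 1 := by
  have hfac : N.choose k * (N - k).choose k * (k ! * k ! * m !) = N ! := by
    have h₁ := Nat.choose_mul_factorial_mul_factorial (show k ≤ N by omega)
    have h₂ := Nat.add_choose_mul_factorial_mul_factorial m k
    rw [show N - k = m + k by omega] at h₁ ⊢
    rw [← h₁, ← h₂]
    ring
  have hA : ((N.choose k * (N - k).choose k : ℕ) : ℝ) = N ! / (k ! * k ! * m !) := by
    rw [eq_div_iff (by positivity)]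
    exact_mod_cast hfac
  have hlog : log ((N.choose k * (N - k).choose k : ℕ) : ℝ) = log N ! - 2 * log k ! - log m ! := by
    rw [hA, log_div (by positivity) (by positivity), log_mul (by positivity) (by positivity),
      log_mul (by positivity) (by positivity)]
    ring
  have hlog2pi : 0 ≤ log (2 * π) := log_nonneg (by linarith [pi_gt_three])
  have hNN : (N : ℝ) = 2 * k + m := by exact_mod_cast hN
  rw [hlog]
  linarith [Stirling.log_factorial_le_stirling (show N ≠ 0 by omega),
    Stirling.le_log_factorial_stirling hk, Stirling.le_log_factorial_stirling hm]

lemma mul_log_sub_mul_log_le_entropy {c N k m : ℝ} (hc : 0 < c) (hc2 : 2 * c < 1) (hk : 0 < k)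
    (hm : 0 < m) (hN : N = 2 * k + m) (hk_le : k ≤ c * N) (hk_ge : c * N - 1 ≤ k) :
    N * log N - 2 * (k * log k) - m * log m ≤
      -N * ((1 - 2 * c) * log (1 - 2 * c) + 2 * c * log c) - 2 * log (1 - 2 * c) := by
  have hN0 : 0 < N := by linarith
  have hb : 0 < 1 - 2 * c := by linarith
  -- Gibbs against `(cN, cN, (1 - 2c)N)`, which has the same total `N` as `(k, k, m)`.
  have gibbs_k := mul_log_le_mul_log_add_sub hk (mul_pos hc hN0)
  have gibbs_m := mul_log_le_mul_log_add_sub hm (mul_pos hb hN0)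
  rw [log_mul hc.ne' hN0.ne'] at gibbs_k
  rw [log_mul hb.ne' hN0.ne'] at gibbs_m
  have hc_round : (c * N - k) * log c ≤ 0 :=
    mul_nonpos_of_nonneg_of_nonpos (by linarith) (log_neg hc (by linarith)).le
  have hb_round : 0 ≤ (c * N - k - 1) * log (1 - 2 * c) :=
    mul_nonneg_of_nonpos_of_nonpos (by linarith) (log_neg hb (by linarith)).le
  have hsplit : N * log N = 2 * (k * log N) + m * log N := by rw [hN]; ring
  subst hN
  linarith

/-- The expected number of ordered pairs of disjoint `k`-sets with no edge between them in
`G(N, p)`. -/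
noncomputable def expectedEmptyPairs (N k : ℕ) (p : ℝ) : ℝ :=
  (N.choose k * (N - k).choose k : ℕ) * (1 - p) ^ (k * k)

lemma mul_self_mul_log_one_sub_le {c d : ℝ} {N k : ℕ} (hd : 0 ≤ d) (hdN : d < N)
    (hk_ge : c * N - 1 ≤ k) (hcN : 1 ≤ c * N) :
    ((k * k : ℕ) : ℝ) * log (1 - d / N) ≤ -(c ^ 2 * d) * N + 2 * c * d := by
  have hN0 : (0 : ℝ) < N := hd.trans_lt hdN
  have hp : 0 < 1 - d / N := by rw [sub_pos, div_lt_one hN0]; exact hdN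
  have hsq : (c * N - 1) ^ 2 ≤ (k : ℝ) * k := by nlinarith
  have hexpand : (c * N - 1) ^ 2 * (d / N) = c ^ 2 * d * N - 2 * c * d + d / N := by
    field_simp
    ring
  calc ((k * k : ℕ) : ℝ) * log (1 - d / N)
      ≤ (k * k) * (-(d / N)) := by
        push_cast
        exact mul_le_mul_of_nonneg_left (by linarith [log_le_sub_one_of_pos hp]) (by positivity)
    _ ≤ -((c * N - 1) ^ 2 * (d / N)) := by
        linarith [mul_le_mul_of_nonneg_right hsq (by positivity : 0 ≤ d / N)]
    _ ≤ -(c ^ 2 * d) * N + 2 * c * d := by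
        linarith [hexpand, (by positivity : 0 ≤ d / N)]

lemma log_expectedEmptyPairs_le {c d : ℝ} (hc : 0 < c) (hc2 : 2 * c < 1) (hd : 0 ≤ d) {N : ℕ}
    (hdN : d < N) (hcN : 2 ≤ c * N) (hbN : 1 ≤ (1 - 2 * c) * N) :
    log (expectedEmptyPairs N ⌊c * N⌋₊ (d / N)) ≤
      -N * ((1 - 2 * c) * log (1 - 2 * c) + 2 * c * log c + c ^ 2 * d)
        + (1 + 2 * c * d - log (c / 2) - 5 / 2 * log (1 - 2 * c)) - log N := by
  set k := ⌊c * N⌋₊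
  have hN0 : (0 : ℝ) < N := hd.trans_lt hdN
  have hk_le : (k : ℝ) ≤ c * N := Nat.floor_le (by positivity)
  have hk_ge : c * N - 1 ≤ k := by linarith [Nat.lt_floor_add_one (c * N)]
  obtain ⟨m, hm⟩ : ∃ m, N = 2 * k + m := by
    have : ((2 * k : ℕ) : ℝ) ≤ N := by push_cast; linarith
    exact ⟨N - 2 * k, by have := Nat.cast_le.mp this; omega⟩
  have hNkm : (N : ℝ) = 2 * k + m := by exact_mod_cast hm
  have hk1 : (1 : ℝ) ≤ k := by linarith
  have hm1 : (1 : ℝ) ≤ m := by linarith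
  have hchoose := log_choose_mul_choose_le hm
    (Nat.one_le_iff_ne_zero.mp (Nat.one_le_cast.mp hk1))
    (Nat.one_le_iff_ne_zero.mp (Nat.one_le_cast.mp hm1))
  have hent := mul_log_sub_mul_log_le_entropy hc hc2 (by linarith) (by linarith) hNkm hk_le hk_ge
  have hpow := mul_self_mul_log_one_sub_le hd hdN hk_ge (by linarith)
  have hlogk : log (c / 2) + log N ≤ log k := by
    rw [← log_mul (by positivity) (by positivity)]
    exact log_le_log (by positivity) (by linarith)
  have hlogm : log (1 - 2 * c) + log N ≤ log m := by
    rw [← log_mul (by linarith) (by positivity)]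
    exact log_le_log (by nlinarith) (by linarith)
  have hA : ((N.choose k * (N - k).choose k : ℕ) : ℝ) ≠ 0 := by
    have := Nat.choose_pos (show k ≤ N by omega)
    have := Nat.choose_pos (show k ≤ N - k by omega)
    positivity
  have hp : 0 < 1 - d / N := by rw [sub_pos, div_lt_one hN0]; exact hdN
  rw [expectedEmptyPairs, log_mul hA (by positivity), log_pow]
  linarith

lemma pos_of_entropy_add_mul_nonneg {c d : ℝ} (hc : 0 < c) (hc2 : 2 * c < 1)
    (hd : (1 - 2 * c) * log (1 - 2 * c) + 2 * c * log c + c ^ 2 * d ≥ 0) : 0 < d := by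
  have hb := mul_neg_of_pos_of_neg (by linarith : 0 < 1 - 2 * c)
    (log_neg (x := 1 - 2 * c) (by linarith) (by linarith))
  have ha := mul_neg_of_pos_of_neg (by linarith : 0 < 2 * c) (log_neg hc (by linarith))
  exact pos_of_mul_pos_right (by linarith) (sq_nonneg c)

lemma tendsto_expectedEmptyPairs_zero {c d : ℝ} (hc : 0 < c) (hc2 : 2 * c < 1)
    (hd : (1 - 2 * c) * log (1 - 2 * c) + 2 * c * log c + c ^ 2 * d ≥ 0) :
    Tendsto (fun N : ℕ => expectedEmptyPairs N ⌊c * N⌋₊ (d / N)) atTop (𝓝 0) := by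
  have hd0 := (pos_of_entropy_add_mul_nonneg hc hc2 hd).le
  set C := 1 + 2 * c * d - log (c / 2) - 5 / 2 * log (1 - 2 * c) with hC
  have hN := tendsto_natCast_atTop_atTop (R := ℝ)
  refine squeeze_zero' ?_ ?_ (tendsto_const_div_atTop_nhds_zero_nat (exp C))
  · filter_upwards [hN.eventually_gt_atTop d] with N hdN
    have hp : 0 ≤ 1 - d / N := by rw [sub_nonneg, div_le_one (hd0.trans_lt hdN)]; exact hdN.le
    unfold expectedEmptyPairs
    positivity
  · filter_upwards [hN.eventually_gt_atTop d, (hN.const_mul_atTop hc).eventually_ge_atTop 2,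
      (hN.const_mul_atTop (by linarith : 0 < 1 - 2 * c)).eventually_ge_atTop 1]
      with N hdN hcN hbN
    have hN0 : (0 : ℝ) < N := hd0.trans_lt hdN
    calc expectedEmptyPairs N ⌊c * N⌋₊ (d / N)
        ≤ exp (log (expectedEmptyPairs N ⌊c * N⌋₊ (d / N))) := le_exp_log _
      _ ≤ exp (C - log N) := by
          gcongr
          linarith [log_expectedEmptyPairs_le hc hc2 hd0 hdN hcN hbN, mul_nonneg hN0.le hd]
      _ = exp C / N := by rw [exp_sub, exp_log hN0]

instance erdosRenyi.instIsProbabilityMeasure (N : ℕ) (p : ℝ) :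
    IsProbabilityMeasure (erdosRenyi N p) := by
  unfold erdosRenyi; infer_instance

lemma Finset.card_image_sym2Mk_product {α : Type*} [DecidableEq α] {S T : Finset α}
    (h : Disjoint S T) : ((S ×ˢ T).image fun x => s(x.1, x.2)).card = S.card * T.card := by
  rw [Finset.card_image_of_injOn, Finset.card_product]
  rintro ⟨a, b⟩ hab ⟨a', b'⟩ hab' heq
  simp only [Finset.coe_product, Set.mem_prod, Finset.mem_coe] at hab hab'
  rcases Sym2.eq_iff.mp heq with ⟨rfl, rfl⟩ | ⟨rfl, -⟩
  · rfl
  · exact (Finset.disjoint_left.mp h hab.1 hab'.2).elim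

lemma erdosRenyi_setOf_not_hasEdgeBetween {N : ℕ} {p : ℝ} (hp0 : 0 ≤ p) (hp1 : p ≤ 1)
    {S T : Finset (Fin N)} (h : Disjoint S T) :
    erdosRenyi N p {f | ¬ hasEdgeBetween f S T} = ENNReal.ofReal ((1 - p) ^ (S.card * T.card)) := by
  set E := (S ×ˢ T).image fun x => s(x.1, x.2)
  have hset : {f | ¬ hasEdgeBetween f S T} = (E : Set (Sym2 (Fin N))).pi fun _ => {false} := by
    ext f
    simp only [hasEdgeBetween, E, Set.mem_ofPred_eq, Finset.coe_image, Set.mem_pi,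
      Set.forall_mem_image, Finset.mem_coe, Finset.mem_product, Set.mem_singleton_iff]
    aesop
  have hq : min (Real.toNNReal p) 1 = Real.toNNReal p := min_eq_left (by simpa using hp1)
  rw [hset, erdosRenyi, Measure.pi_pi_finset, Finset.prod_const,
    Finset.card_image_sym2Mk_product h,
    PMF.toMeasure_apply_singleton _ _ (measurableSet_singleton _)]
  simp only [PMF.bernoulli_apply, hq, cond_false]
  rw [ENNReal.ofReal_pow (by linarith), ENNReal.ofReal_sub _ hp0, ENNReal.ofReal_one]
  rfl

lemma one_sub_expectedEmptyPairs_le_erdosRenyi {N : ℕ} {p : ℝ} (hp0 : 0 ≤ p) (hp1 : p ≤ 1)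
    (k : ℕ) :
    1 - ENNReal.ofReal (expectedEmptyPairs N k p) ≤
      erdosRenyi N p {f | ∀ S T : Finset (Fin N), Disjoint S T →
        S.card = k → T.card = k → hasEdgeBetween f S T} := by
  set G := {f : Sym2 (Fin N) → Bool | ∀ S T : Finset (Fin N), Disjoint S T →
    S.card = k → T.card = k → hasEdgeBetween f S T}
  have hcover : Gᶜ ⊆ ⋃ S ∈ Finset.univ.powersetCard k, ⋃ T ∈ (Sᶜ).powersetCard k,
      {f | ¬ hasEdgeBetween f S T} := by
    intro f hf
    simp only [G, Set.mem_compl_iff, Set.mem_ofPred_eq, not_forall] at hf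
    obtain ⟨S, T, hST, hS, hT, hf⟩ := hf
    simp only [Set.mem_iUnion, Finset.mem_powersetCard, exists_prop]
    exact ⟨S, ⟨Finset.subset_univ S, hS⟩, T,
      ⟨Finset.subset_compl_iff_disjoint_left.mpr hST, hT⟩, hf⟩
  have hbad : erdosRenyi N p Gᶜ ≤ ENNReal.ofReal (expectedEmptyPairs N k p) :=
    calc erdosRenyi N p Gᶜ
        ≤ ∑ S ∈ Finset.univ.powersetCard k, ∑ T ∈ (Sᶜ).powersetCard k,
            erdosRenyi N p {f | ¬ hasEdgeBetween f S T} :=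
          (measure_mono hcover).trans <| (measure_biUnion_finset_le _ _).trans <|
            Finset.sum_le_sum fun S _ => measure_biUnion_finset_le _ _
      _ = ∑ S ∈ Finset.univ.powersetCard k, ∑ T ∈ (Sᶜ).powersetCard k,
            ENNReal.ofReal ((1 - p) ^ (k * k)) := by
          refine Finset.sum_congr rfl fun S hS => Finset.sum_congr rfl fun T hT => ?_
          rw [Finset.mem_powersetCard] at hS hT
          rw [erdosRenyi_setOf_not_hasEdgeBetween hp0 hp1
            (Finset.subset_compl_iff_disjoint_left.mp hT.1), hS.2, hT.2]
      _ = ∑ S ∈ Finset.univ.powersetCard k, ((N - k).choose k : ENNReal) *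
            ENNReal.ofReal ((1 - p) ^ (k * k)) := by
          refine Finset.sum_congr rfl fun S hS => ?_
          rw [Finset.sum_const, Finset.card_powersetCard, Finset.card_compl,
            (Finset.mem_powersetCard.mp hS).2, Fintype.card_fin, nsmul_eq_mul]
      _ = _ := by
          rw [expectedEmptyPairs, Finset.sum_const, Finset.card_powersetCard, Finset.card_univ,
            Fintype.card_fin, nsmul_eq_mul, ← mul_assoc, ENNReal.ofReal_mul (by positivity),
            ENNReal.ofReal_natCast, Nat.cast_mul]
  rw [← compl_compl G, prob_compl_eq_one_sub (Set.toFinite _).measurableSet]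
  exact tsub_le_tsub_left hbad 1

theorem stmt_11 (c d : ℝ) (hc : 0 < c) (hc2 : 2 * c < 1)
    (hd : (1 - 2 * c) * Real.log (1 - 2 * c) + 2 * c * Real.log c + c ^ 2 * d ≥ 0) :
    Filter.Tendsto
      (fun N : ℕ => erdosRenyi N (d / N)
        {f | ∀ S T : Finset (Fin N), Disjoint S T →
          S.card = ⌊c * N⌋₊ → T.card = ⌊c * N⌋₊ → hasEdgeBetween f S T})
      Filter.atTop (nhds 1) := by
  have hd0 := (pos_of_entropy_add_mul_nonneg hc hc2 hd).le
  have hlow : Tendsto (fun N : ℕ => 1 - ENNReal.ofReal (expectedEmptyPairs N ⌊c * N⌋₊ (d / N)))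
      atTop (𝓝 1) := by
    simpa using ENNReal.Tendsto.sub tendsto_const_nhds
      (ENNReal.tendsto_ofReal (tendsto_expectedEmptyPairs_zero hc hc2 hd))
      (Or.inl ENNReal.one_ne_top)
  refine tendsto_of_tendsto_of_tendsto_of_le_of_le' hlow tendsto_const_nhds ?_
    (Eventually.of_forall fun N => prob_le_one)
  filter_upwards [(tendsto_natCast_atTop_atTop (R := ℝ)).eventually_gt_atTop d] with N hdN
  exact one_sub_expectedEmptyPairs_le_erdosRenyi (by positivity)
    ((div_le_one (hd0.trans_lt hdN)).mpr hdN.le) _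
end

section
/- In any red/blue edge-coloring of a complete tripartite graph with parts X', Z, Y' where |X'| = m₁, |Y'| = m₂, |Z| = m₁ + m₂ − 1, if there is no blue K_{m₁,m₂} between X' and Z and no blue K_{m₁,m₂} between Y' and Z (in the appropriate orientations), then |N^r_Z(X')| ≥ m₁ and |N^r_Z(Y')| ≥ m₂, and hence there exists a vertex z ∈ Z that is joined by a red edge to some x ∈ X' and by a red edge to some y ∈ Y'. -/
theorem stmt_17 (m₁ m₂ : ℕ) (hm₁ : 0 < m₁) (hm₂ : 0 < m₂)
    -- red edges between `X' = Fin m₁` and `Z = Fin (m₁+m₂-1)`, and between `Y' = Fin m₂` and `Z`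
    (rXZ : Fin m₁ → Fin (m₁ + m₂ - 1) → Prop)
    (rYZ : Fin m₂ → Fin (m₁ + m₂ - 1) → Prop)
    -- no blue `K_{m₁,m₂}` between `X'` and `Z` (with the `m₂`-side in `Z`)
    (h1 : ¬ ∃ B : Finset (Fin (m₁ + m₂ - 1)), B.card = m₂ ∧
        ∀ x : Fin m₁, ∀ z ∈ B, ¬ rXZ x z)
    -- no blue `K_{m₁,m₂}` between `Y'` and `Z` (with the `m₁`-side in `Z`)
    (h2 : ¬ ∃ B : Finset (Fin (m₁ + m₂ - 1)), B.card = m₁ ∧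
        ∀ y : Fin m₂, ∀ z ∈ B, ¬ rYZ y z) :
    m₁ ≤ {z | ∃ x, rXZ x z}.ncard ∧ m₂ ≤ {z | ∃ y, rYZ y z}.ncard ∧
      ∃ (z : Fin (m₁ + m₂ - 1)) (x : Fin m₁) (y : Fin m₂), rXZ x z ∧ rYZ y z := by
  classical
  set A : Finset (Fin (m₁ + m₂ - 1)) := Finset.univ.filter (fun z => ∃ x, rXZ x z) with hA
  set B : Finset (Fin (m₁ + m₂ - 1)) := Finset.univ.filter (fun z => ∃ y, rYZ y z) with hB
  have hAset : {z | ∃ x, rXZ x z} = (A : Set (Fin (m₁ + m₂ - 1))) := by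
    ext z; simp [hA]
  have hBset : {z | ∃ y, rYZ y z} = (B : Set (Fin (m₁ + m₂ - 1))) := by
    ext z; simp [hB]
  
  have hnm : m₁ + m₂ - 1 + 1 = m₁ + m₂ := by omega
  -- m₁ ≤ A.card
  have hAcard : m₁ ≤ A.card := by
    by_contra hlt
    push_neg at hlt
    have hcompl : m₂ ≤ Aᶜ.card := by
      have := Finset.card_compl A
      have hu : Fintype.card (Fin (m₁ + m₂ - 1)) = m₁ + m₂ - 1 := Fintype.card_fin _
      omega
    obtain ⟨C, hCsub, hCcard⟩ := Finset.exists_subset_card_eq hcompl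
    exact h1 ⟨C, hCcard, fun x z hz hr => by
      have : z ∈ Aᶜ := hCsub hz
      simp [hA] at this
      exact this x hr⟩
  have hBcard : m₂ ≤ B.card := by
    by_contra hlt
    push_neg at hlt
    have hcompl : m₁ ≤ Bᶜ.card := by
      have := Finset.card_compl B
      have hu : Fintype.card (Fin (m₁ + m₂ - 1)) = m₁ + m₂ - 1 := Fintype.card_fin _
      omega
    obtain ⟨C, hCsub, hCcard⟩ := Finset.exists_subset_card_eq hcompl
    exact h2 ⟨C, hCcard, fun y z hz hr => by
      have : z ∈ Bᶜ := hCsub hz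
      simp [hB] at this
      exact this y hr⟩
  refine ⟨by rw [hAset, Set.ncard_coe_finset]; exact hAcard,
    by rw [hBset, Set.ncard_coe_finset]; exact hBcard, ?_⟩
  have hinter : (A ∩ B).Nonempty := by
    rw [← Finset.card_pos]
    have h1 := Finset.card_union_add_card_inter A B
    have h2 : (A ∪ B).card ≤ m₁ + m₂ - 1 := by
      have := Finset.card_le_univ (A ∪ B)
      simpa using this
    omega
  obtain ⟨z, hz⟩ := hinter
  simp [hA, hB, Finset.mem_inter] at hz
  obtain ⟨⟨x, hx⟩, ⟨y, hy⟩⟩ := hz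
  exact ⟨z, x, y, hx, hy⟩
end
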